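/- arXiv:1501.03056 — 2 statements merged into one kernel-verified Lean document; each statement's English description precedes it below -/
import Mathlib

section
/- Let A ∈ GL_d(R) and let w be a unit vector with ‖Aw‖ = ‖A‖ (operator norm). Then for any vector x ∈ R^d with ‖Ax‖ < ‖x‖, one has |⟨x,w⟩| · ‖Aw‖ ≤ ‖x‖. -/
open RealInnerProductSpace

/-!
The quadratic form `v ↦ ‖A‖²‖v‖² - ‖A v‖²` is nonnegative and vanishes at `w`, so its
first variation at `w` vanishes too: `⟪A w, A v⟫ = ‖A‖² ⟪w, v⟫` for every `v`, i.e. `w` is an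
eigenvector of `AᵀA` for `‖A‖²`. Cauchy–Schwarz then gives
`‖A‖² |⟪x, w⟫| = |⟪A w, A x⟫| ≤ ‖A‖ ‖A x‖`, so `|⟪x, w⟫| ‖A w‖ ≤ ‖A x‖ < ‖x‖`.
-/

namespace ContinuousLinearMap

variable {E F : Type*} [NormedAddCommGroup E] [InnerProductSpace ℝ E]
  [NormedAddCommGroup F] [InnerProductSpace ℝ F]

theorem inner_map_map_eq_sq_opNorm_mul_inner_of_norm_map_eq (A : E →L[ℝ] F) {w : E}
    (hAw : ‖A w‖ = ‖A‖ * ‖w‖) (v : E) :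
    ⟪A w, A v⟫ = ‖A‖ ^ 2 * ⟪w, v⟫ := by
  have hquad : ∀ t : ℝ, 0 ≤ (‖A‖ ^ 2 * ‖v‖ ^ 2 - ‖A v‖ ^ 2) * (t * t)
      + 2 * (‖A‖ ^ 2 * ⟪w, v⟫ - ⟪A w, A v⟫) * t + 0 := by
    intro t
    have hle : ‖A (w + t • v)‖ ^ 2 ≤ (‖A‖ * ‖w + t • v‖) ^ 2 :=
      pow_le_pow_left₀ (norm_nonneg _) (A.le_opNorm _) 2
    rw [map_add, map_smul, mul_pow, norm_add_sq_real, norm_add_sq_real, norm_smul, norm_smul,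
      real_inner_smul_right, real_inner_smul_right, hAw, Real.norm_eq_abs] at hle
    simp only [mul_pow, sq_abs] at hle
    linarith
  have hdiscrim := discrim_le_zero hquad
  rw [discrim] at hdiscrim
  nlinarith [sq_nonneg (‖A‖ ^ 2 * ⟪w, v⟫ - ⟪A w, A v⟫)]

theorem abs_inner_mul_norm_map_le_norm_map (A : E →L[ℝ] F) {w : E} (hw : ‖w‖ = 1)
    (hAw : ‖A w‖ = ‖A‖) (x : E) :
    |⟪x, w⟫| * ‖A w‖ ≤ ‖A x‖ := by
  rcases (norm_nonneg A).eq_or_lt with hA | hA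
  · simp [hAw, ← hA]
  have hcs : ‖A‖ * (|⟪x, w⟫| * ‖A‖) ≤ ‖A‖ * ‖A x‖ := by
    calc ‖A‖ * (|⟪x, w⟫| * ‖A‖) = |⟪A w, A x⟫| := by
          rw [A.inner_map_map_eq_sq_opNorm_mul_inner_of_norm_map_eq (by rw [hAw, hw, mul_one]),
            abs_mul, abs_pow, abs_norm, real_inner_comm]
          ring
      _ ≤ ‖A w‖ * ‖A x‖ := abs_real_inner_le_norm _ _
      _ = ‖A‖ * ‖A x‖ := by rw [hAw]
  rw [hAw]
  exact le_of_mul_le_mul_left hcs hA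

end ContinuousLinearMap

theorem stmt2_general (d : ℕ)
    (A : EuclideanSpace ℝ (Fin d) →L[ℝ] EuclideanSpace ℝ (Fin d))
    (w : EuclideanSpace ℝ (Fin d)) (hw : ‖w‖ = 1) (hAw : ‖A w‖ = ‖A‖)
    (x : EuclideanSpace ℝ (Fin d)) (hx : ‖A x‖ < ‖x‖) :
    |⟪x, w⟫| * ‖A w‖ ≤ ‖x‖ :=
  (A.abs_inner_mul_norm_map_le_norm_map hw hAw x).trans hx.le

/-- If `A` is an invertible linear operator on `ℝ^d` and `w` a unit vector with
`‖Aw‖ = ‖A‖`, then for any `x` with `‖Ax‖ < ‖x‖` one has `|⟨x,w⟩|·‖Aw‖ ≤ ‖x‖`. -/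
theorem stmt2 (d : ℕ)
    (A : EuclideanSpace ℝ (Fin d) →L[ℝ] EuclideanSpace ℝ (Fin d))
    (hA : Function.Bijective A)
    (w : EuclideanSpace ℝ (Fin d)) (hw : ‖w‖ = 1) (hAw : ‖A w‖ = ‖A‖)
    (x : EuclideanSpace ℝ (Fin d)) (hx : ‖A x‖ < ‖x‖) :
    |⟪x, w⟫| * ‖A w‖ ≤ ‖x‖ :=
  stmt2_general d A w hw hAw x hx
end

section
/- Let M_e = αI + βE_{i_e j_e} be d×d matrices for edges e = (i_e, j_e) with α ≥ 0, β > 0. For edges e₁,...,e_ℓ, every entry of the matrix ∏_{r≤ℓ} M_{e_r} - β^ℓ · [e₁,...,e_ℓ is a connected path] · E_{i₁ j_ℓ} is bounded in absolute value by α·β^{ℓ-1}·2^ℓ, assuming α ≤ β. -/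
/-!
Write the factors as `αI + βE_{e_r}`. A product of matrix units `E_{e_1} ⋯ E_{e_ℓ}` is
`E_{i_1 j_ℓ}` when the edges form a path and `0` otherwise, so the matrix to bound is
`∏ (αI + βE_{e_r}) - ∏ βE_{e_r}`. In the `ℓ∞` operator norm, which is submultiplicative,
dominates every entry and gives `‖I‖ = ‖E_{ij}‖ = 1`, peeling off one factor at a time bounds
this difference by `(α + β)^ℓ - β^ℓ`, and `α + β ≤ 2β` turns that into `αβ^(ℓ-1)(2^ℓ - 1)`.
-/

theorem add_pow_succ_sub_pow_succ_le {α β : ℝ} (hα : 0 ≤ α) (hαβ : α ≤ β) (n : ℕ) :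
    (α + β) ^ (n + 1) - β ^ (n + 1) ≤ α * β ^ n * (2 ^ (n + 1) - 1) := by
  induction n with
  | zero => norm_num
  | succ n ih =>
    have hgap : 0 ≤ (α + β) ^ (n + 1) - β ^ (n + 1) :=
      sub_nonneg.mpr (pow_le_pow_left₀ (hαβ.trans' hα) (by linarith) _)
    calc (α + β) ^ (n + 2) - β ^ (n + 2)
        = (α + β) * ((α + β) ^ (n + 1) - β ^ (n + 1)) + α * β ^ (n + 1) := by ring
      _ ≤ (2 * β) * (α * β ^ n * (2 ^ (n + 1) - 1)) + α * β ^ (n + 1) := by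
        gcongr <;> linarith
      _ = α * β ^ (n + 1) * (2 ^ (n + 2) - 1) := by ring

section NormedRing

variable {R : Type*} [SeminormedRing R] [NormOneClass R]

theorem norm_prod_ofFn_le_pow {n : ℕ} {f : Fin n → R} {c : ℝ} (hf : ∀ r, ‖f r‖ ≤ c) :
    ‖(List.ofFn f).prod‖ ≤ c ^ n := by
  induction n with
  | zero => simp
  | succ n ih =>
    rw [List.ofFn_succ, List.prod_cons, pow_succ']
    exact (norm_mul_le _ _).trans <|
      mul_le_mul (hf 0) (ih fun r => hf r.succ) (norm_nonneg _) ((norm_nonneg _).trans (hf 0))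

theorem norm_prod_ofFn_add_sub_prod_ofFn_le {n : ℕ} {a b : Fin n → R} {α β : ℝ}
    (ha : ∀ r, ‖a r‖ ≤ α) (hb : ∀ r, ‖b r‖ ≤ β) :
    ‖(List.ofFn fun r => a r + b r).prod - (List.ofFn b).prod‖ ≤ (α + β) ^ n - β ^ n := by
  induction n with
  | zero => simp
  | succ n ih =>
    have hα : 0 ≤ α := (norm_nonneg _).trans (ha 0)
    have hβ : 0 ≤ β := (norm_nonneg _).trans (hb 0)
    set P := (List.ofFn fun r : Fin n => a r.succ + b r.succ).prod
    set Q := (List.ofFn fun r : Fin n => b r.succ).prod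
    have hP : ‖P‖ ≤ (α + β) ^ n :=
      norm_prod_ofFn_le_pow fun r => (norm_add_le _ _).trans (add_le_add (ha _) (hb _))
    have hPQ : ‖P - Q‖ ≤ (α + β) ^ n - β ^ n :=
      ih (fun r => ha r.succ) (fun r => hb r.succ)
    rw [List.ofFn_succ, List.ofFn_succ, List.prod_cons, List.prod_cons]
    calc ‖(a 0 + b 0) * P - b 0 * Q‖ = ‖a 0 * P + b 0 * (P - Q)‖ := by noncomm_ring
      _ ≤ ‖a 0‖ * ‖P‖ + ‖b 0‖ * ‖P - Q‖ :=
        (norm_add_le _ _).trans (add_le_add (norm_mul_le _ _) (norm_mul_le _ _))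
      _ ≤ α * (α + β) ^ n + β * ((α + β) ^ n - β ^ n) := by
        gcongr
        exacts [ha 0, hb 0]
      _ = (α + β) ^ (n + 1) - β ^ (n + 1) := by ring

end NormedRing

namespace Matrix

variable {m n α : Type*} [Fintype m] [Fintype n]

theorem prod_ofFn_single_one [DecidableEq m] [Semiring α] {k : ℕ} (e : Fin (k + 1) → m × m) :
    (List.ofFn fun r => single (e r).1 (e r).2 (1 : α)).prod =
      if ∀ r : Fin k, (e r.castSucc).2 = (e r.succ).1 then
        single (e 0).1 (e (Fin.last k)).2 1 else 0 := by
  induction k with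
  | zero => simp
  | succ k ih =>
    rw [List.ofFn_succ, List.prod_cons, ih fun r => e r.succ]
    simp only [Fin.forall_fin_succ, Fin.succ_castSucc, Fin.succ_last, Fin.castSucc_zero,
      Fin.succ_zero_eq_one]
    by_cases h0 : (e 0).2 = (e 1).1
    · split_ifs <;> simp_all [single_mul_single_same]
    · split_ifs <;> simp_all [single_mul_single_of_ne]

attribute [local instance] Matrix.linftyOpSeminormedAddCommGroup

theorem norm_entry_le_linfty_opNorm [SeminormedAddCommGroup α] (A : Matrix m n α)
    (i : m) (j : n) : ‖A i j‖ ≤ ‖A‖ := by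
  rw [← coe_nnnorm, ← coe_nnnorm, linfty_opNNNorm_def, NNReal.coe_le_coe]
  exact (Finset.single_le_sum (fun _ _ => zero_le) (Finset.mem_univ j)).trans
    (Finset.le_sup (f := fun i => ∑ j, ‖A i j‖₊) (Finset.mem_univ i))

theorem linfty_opNorm_single [DecidableEq m] [DecidableEq n] [SeminormedAddCommGroup α]
    (i : m) (j : n) (c : α) : ‖single i j c‖ = ‖c‖ := by
  rw [← coe_nnnorm, ← coe_nnnorm, linfty_opNNNorm_def, NNReal.coe_inj]
  simp only [single_apply, ite_and, apply_ite nnnorm, nnnorm_zero, Finset.sum_ite_irrel,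
    Finset.sum_ite_eq, Finset.mem_univ, if_true, Finset.sum_const_zero]
  apply le_antisymm
  · exact Finset.sup_le fun k _ => by split_ifs <;> simp
  · exact (if_pos rfl).symm.le.trans
      (Finset.le_sup (f := fun k => if i = k then ‖c‖₊ else 0) (Finset.mem_univ i))

end Matrix

attribute [local instance] Matrix.linftyOpNormedRing Matrix.linftyOpNormedAlgebra

/-- For matrices `M_e = αI + βE_{i_e j_e}` with `0 ≤ α ≤ β`, `β > 0`, every
entry of `∏_{r≤ℓ} M_{e_r} - β^ℓ·[e₁,…,e_ℓ is a connected path]·E_{i₁ j_ℓ}` is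
bounded in absolute value by `α·β^{ℓ-1}·2^ℓ`. -/
theorem stmt11 (d ℓ : ℕ) (hℓ : 1 ≤ ℓ) (α β : ℝ) (hα : 0 ≤ α) (hβ : 0 < β)
    (hαβ : α ≤ β) (e : Fin ℓ → Fin d × Fin d) (i j : Fin d) :
    |((List.ofFn fun r : Fin ℓ =>
          α • (1 : Matrix (Fin d) (Fin d) ℝ) +
            β • Matrix.single (e r).1 (e r).2 (1 : ℝ)).prod -
        β ^ ℓ •
          (if ∀ r : Fin ℓ, ∀ h : (r : ℕ) + 1 < ℓ, (e r).2 = (e ⟨(r : ℕ) + 1, h⟩).1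
            then (1 : ℝ) else 0) •
          Matrix.single (e ⟨0, hℓ⟩).1 (e ⟨ℓ - 1, Nat.sub_lt hℓ one_pos⟩).2
            (1 : ℝ)) i j|
      ≤ α * β ^ (ℓ - 1) * 2 ^ ℓ := by
  obtain ⟨n, rfl⟩ : ∃ n, ℓ = n + 1 := ⟨ℓ - 1, by omega⟩
  have : Nonempty (Fin d) := ⟨i⟩
  have hpath : (∀ r : Fin (n + 1), ∀ h : (r : ℕ) + 1 < n + 1,
        (e r).2 = (e ⟨(r : ℕ) + 1, h⟩).1) ↔
      ∀ r : Fin n, (e r.castSucc).2 = (e r.succ).1 :=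
    ⟨fun h r => h r.castSucc (by simp), fun h r hr => h ⟨r, by omega⟩⟩
  have hunits : β ^ (n + 1) • (if ∀ r : Fin (n + 1), ∀ h : (r : ℕ) + 1 < n + 1,
        (e r).2 = (e ⟨(r : ℕ) + 1, h⟩).1 then (1 : ℝ) else 0) •
        Matrix.single (e ⟨0, hℓ⟩).1 (e ⟨n + 1 - 1, Nat.sub_lt hℓ one_pos⟩).2 (1 : ℝ) =
      (List.ofFn fun r => β • Matrix.single (e r).1 (e r).2 (1 : ℝ)).prod := by
    rw [List.ofFn_comp' _ (β • ·), ← List.smul_prod, List.length_ofFn,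
      Matrix.prod_ofFn_single_one, if_congr hpath rfl rfl, ite_smul, one_smul, zero_smul]
    rfl
  rw [hunits, ← Real.norm_eq_abs]
  calc _ ≤ _ := Matrix.norm_entry_le_linfty_opNorm _ i j
    _ ≤ (α + β) ^ (n + 1) - β ^ (n + 1) :=
      norm_prod_ofFn_add_sub_prod_ofFn_le (fun _ => by simp [norm_smul, abs_of_nonneg hα])
        (fun _ => by simp [Matrix.linfty_opNorm_single, abs_of_pos hβ])
    _ ≤ α * β ^ n * (2 ^ (n + 1) - 1) := add_pow_succ_sub_pow_succ_le hα hαβ n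
    _ ≤ α * β ^ (n + 1 - 1) * 2 ^ (n + 1) := by
      rw [Nat.add_sub_cancel]
      nlinarith [mul_nonneg hα (pow_nonneg hβ.le n)]
end
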